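/- arXiv:1502.03177 — 2 statements merged into one kernel-verified Lean document; each statement's English description precedes it below -/
import Mathlib

section
/- Let k be an odd positive integer and define Φ(q₁,…,q_k) = Σ_{1 ≤ i < j ≤ k} (−1)^{i+j} ω(q_i, q_j) on (ℝ²ⁿ)^k, where ω is the standard symplectic form. Then the linear subspace C = { (z, z̄) ∈ (ℝ²ⁿ)^k × (ℝ²ⁿ)^k : z̄_i = z_{i+1} for all i (indices mod k) }, viewed in (T*ℝ²ⁿ)^k via the componentwise symplectic identification, is the graph of the differential of Φ. -/
open Finset

/-- The standard symplectic form `ω = dp ∧ dq` on `ℝ²ⁿ = ℝⁿ × ℝⁿ`. -/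
noncomputable def stdOmega {n : ℕ} (v w : (Fin n → ℝ) × (Fin n → ℝ)) : ℝ :=
  (∑ i, v.2 i * w.1 i) - ∑ i, v.1 i * w.2 i

/-- Euclidean pairing of a covector with a vector on `ℝ²ⁿ = ℝⁿ × ℝⁿ`. -/
noncomputable def dotE {n : ℕ} (p v : (Fin n → ℝ) × (Fin n → ℝ)) : ℝ :=
  (∑ i, p.1 i * v.1 i) + ∑ i, p.2 i * v.2 i

/-!
`Φ` is the quadratic form `q ↦ ∑ a_ij ω(q_i, q_j)` with `a_ij = (-1)^(i+j)` above the diagonal,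
so by skew-symmetry of `ω` its partial differential in the `i`-th slot is
`v ↦ ω(v, ∑_j ε_ij q_j)` with `ε = a - aᵀ` (`phiSkew`). Through the identification, and since `ω` is
nondegenerate, the graph condition in slot `i` becomes `z_i - z̄_i = ∑_j ε_ij (z_j + z̄_j)`.
For odd `k` the cyclic shift `S` satisfies `ε (1 + S) = 1 - S`, so `z̄ = S z` is a solution;
it is the only one because `1 + ε` is injective for every antisymmetric real `ε`,
as `⟪u, ε u⟫ = 0`.
-/

section PairForm

variable {𝕜 ι E G : Type*} [NontriviallyNormedField 𝕜] [Fintype ι]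
  [NormedAddCommGroup E] [NormedSpace 𝕜 E] [NormedAddCommGroup G] [NormedSpace 𝕜 G]

theorem ContinuousLinearMap.fderiv_diag_apply (B : E →L[𝕜] E →L[𝕜] G) (x h : E) :
    fderiv 𝕜 (fun y => B y y) x h = B x h + B h x := by
  rw [B.fderiv_of_bilinear differentiableAt_fun_id differentiableAt_fun_id]
  simp

noncomputable def pairForm (a : ι → ι → 𝕜) (B : E →L[𝕜] E →L[𝕜] G) :
    (ι → E) →L[𝕜] (ι → E) →L[𝕜] G :=
  ∑ i, ∑ j, a i j • B.bilinearComp (ContinuousLinearMap.proj i) (ContinuousLinearMap.proj j)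

theorem pairForm_apply (a : ι → ι → 𝕜) (B : E →L[𝕜] E →L[𝕜] G) (x y : ι → E) :
    pairForm a B x y = ∑ i, ∑ j, a i j • B (x i) (y j) := by
  simp [pairForm]

theorem pairForm_single_left [DecidableEq ι] (a : ι → ι → 𝕜) (B : E →L[𝕜] E →L[𝕜] G)
    (i : ι) (v : E) (y : ι → E) :
    pairForm a B (Pi.single i v) y = ∑ j, a i j • B v (y j) := by
  rw [pairForm_apply, Fintype.sum_eq_single i fun l hl => by simp [hl]]
  simp

theorem pairForm_single_right [DecidableEq ι] (a : ι → ι → 𝕜) (B : E →L[𝕜] E →L[𝕜] G)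
    (x : ι → E) (i : ι) (v : E) :
    pairForm a B x (Pi.single i v) = ∑ l, a l i • B (x l) v := by
  rw [pairForm_apply]
  refine sum_congr rfl fun l _ => ?_
  rw [Fintype.sum_eq_single i fun j hj => by simp [hj]]
  simp

theorem fderiv_pairForm_diag_single [DecidableEq ι] (a : ι → ι → 𝕜) {B : E →L[𝕜] E →L[𝕜] G}
    (hB : ∀ v w, B w v = -B v w) (x : ι → E) (i : ι) (v : E) :
    fderiv 𝕜 (fun y => pairForm a B y y) x (Pi.single i v) =
      B v (∑ j, (a i j - a j i) • x j) := by
  rw [ContinuousLinearMap.fderiv_diag_apply, pairForm_single_left, pairForm_single_right]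
  simp only [hB v (x _), sub_smul, sum_sub_distrib, map_sub, map_sum, map_smul, smul_neg,
    sum_neg_distrib]
  abel

end PairForm

section StdOmega

variable {n : ℕ}

noncomputable def stdOmegaCLM (n : ℕ) :
    ((Fin n → ℝ) × (Fin n → ℝ)) →L[ℝ] ((Fin n → ℝ) × (Fin n → ℝ)) →L[ℝ] ℝ :=
  LinearMap.toContinuousBilinearMap <| LinearMap.mk₂ ℝ stdOmega
    (fun _ _ _ => by simp only [stdOmega, Prod.fst_add, Prod.snd_add, Pi.add_apply, add_mul,
      sum_add_distrib]; ring)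
    (fun _ _ _ => by simp only [stdOmega, Prod.smul_fst, Prod.smul_snd, Pi.smul_apply,
      smul_eq_mul, mul_assoc, ← mul_sum, mul_sub])
    (fun _ _ _ => by simp only [stdOmega, Prod.fst_add, Prod.snd_add, Pi.add_apply, mul_add,
      sum_add_distrib]; ring)
    (fun _ _ _ => by simp only [stdOmega, Prod.smul_fst, Prod.smul_snd, Pi.smul_apply,
      smul_eq_mul, mul_left_comm _ (_ : ℝ), ← mul_sum, mul_sub])

theorem stdOmegaCLM_apply (v w : (Fin n → ℝ) × (Fin n → ℝ)) : stdOmegaCLM n v w = stdOmega v w :=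
  rfl

theorem stdOmega_swap (v w : (Fin n → ℝ) × (Fin n → ℝ)) : stdOmega w v = -stdOmega v w := by
  simp only [stdOmega, mul_comm (w.1 _), mul_comm (w.2 _)]
  ring

theorem forall_stdOmega_eq_iff {w w' : (Fin n → ℝ) × (Fin n → ℝ)} :
    (∀ v, stdOmega v w = stdOmega v w') ↔ w = w' := by
  refine ⟨fun h => ?_, fun h _ => h ▸ rfl⟩
  ext a
  · simpa [stdOmega, Pi.single_apply] using h (0, Pi.single a 1)
  · simpa [stdOmega, Pi.single_apply] using h (Pi.single a 1, 0)

theorem dotE_half_sub (x y v : (Fin n → ℝ) × (Fin n → ℝ)) :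
    dotE (fun a => (y.2 a - x.2 a) / 2, fun a => (x.1 a - y.1 a) / 2) v =
      stdOmega v ((1 / 2 : ℝ) • (x - y)) := by
  simp only [dotE, stdOmega, Prod.smul_fst, Prod.smul_snd, Prod.fst_sub, Prod.snd_sub,
    Pi.smul_apply, Pi.sub_apply, smul_eq_mul, ← sum_sub_distrib, ← sum_add_distrib]
  refine sum_congr rfl fun a _ => ?_
  ring

end StdOmega

noncomputable def phiCoeff {k : ℕ} (i j : Fin k) : ℝ :=
  if i < j then (-1) ^ ((i : ℕ) + j) else 0

noncomputable def phiSkew {k : ℕ} (i j : Fin k) : ℝ := phiCoeff i j - phiCoeff j i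

theorem phiSkew_swap {k : ℕ} (i j : Fin k) : phiSkew j i = -phiSkew i j := by
  rw [phiSkew, phiSkew, neg_sub]

theorem phiSkew_add_phiSkew_sub_one {m : ℕ} (hm : Even m) (i j : Fin (m + 1)) :
    phiSkew i j + phiSkew i (j - 1) = (if j = i then 1 else 0) - if j = i + 1 then 1 else 0 := by
  have hsucc : ((i + 1 : Fin (m + 1)) : ℕ) = if (i : ℕ) = m then 0 else (i : ℕ) + 1 := by
    simp only [Fin.val_add_one, Fin.ext_iff, Fin.val_last]
  have hpred : ((j - 1 : Fin (m + 1)) : ℕ) = if (j : ℕ) = 0 then m else (j : ℕ) - 1 := by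
    simp only [Fin.coe_sub_one, Fin.ext_iff, Fin.val_zero]
  obtain ⟨t, ht⟩ := hm
  have hi := i.isLt
  have hj := j.isLt
  simp only [phiSkew, phiCoeff, Fin.lt_def, Fin.ext_iff (a := j), hpred, hsucc]
  clear hpred hsucc
  generalize (i : ℕ) = a at *
  generalize (j : ℕ) = b at *
  rcases b with _ | c
  · simp only [neg_one_pow_eq_ite, Nat.even_iff]
    split_ifs <;> first | contradiction | omega | norm_num
  · have hsplit : (c + 1 = if a = m then 0 else a + 1) ↔ c = a := by split_ifs <;> grind
    simp only [Nat.add_one_ne_zero, if_false, Nat.add_sub_cancel, hsplit]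
    rw [show c + 1 + a = a + c + 1 by omega, show a + (c + 1) = a + c + 1 by omega,
      show c + a = a + c by omega, pow_succ]
    simp only [neg_one_pow_eq_ite, Nat.even_iff]
    split_ifs <;> first | omega | norm_num

section Module

variable {M : Type*} [AddCommGroup M] [Module ℝ M]

theorem sum_phiSkew_smul_add_succ {k : ℕ} [NeZero k] (hk : Odd k) (z : Fin k → M) (i : Fin k) :
    ∑ j, phiSkew i j • (z j + z (j + 1)) = z i - z (i + 1) := by
  obtain ⟨m, rfl⟩ : ∃ m, k = m + 1 := ⟨k - 1, (Nat.sub_add_cancel (NeZero.one_le)).symm⟩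
  have hm : Even m := by simpa [Nat.odd_add_one] using hk
  have hshift : ∑ j, phiSkew i j • z (j + 1) = ∑ j, phiSkew i (j - 1) • z j :=
    Fintype.sum_equiv (Equiv.addRight 1) _ _ fun j => by simp
  calc ∑ j, phiSkew i j • (z j + z (j + 1))
      = ∑ j, (phiSkew i j + phiSkew i (j - 1)) • z j := by
        simp only [smul_add, add_smul, sum_add_distrib, hshift]
    _ = ∑ j, ((if j = i then (1 : ℝ) else 0) - if j = i + 1 then 1 else 0) • z j := by
        simp only [phiSkew_add_phiSkew_sub_one hm]
    _ = z i - z (i + 1) := by simp [sub_smul, sum_sub_distrib]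

theorem sum_sum_mul_mul_eq_zero_of_antisymm {ι : Type*} [Fintype ι] {A : ι → ι → ℝ}
    (hA : ∀ i j, A j i = -A i j) (u : ι → ℝ) : ∑ i, ∑ j, A i j * u i * u j = 0 := by
  have h : ∑ i, ∑ j, A i j * u i * u j = -∑ i, ∑ j, A i j * u i * u j := by
    conv_lhs => rw [sum_comm]
    simp only [← sum_neg_distrib]
    refine sum_congr rfl fun i _ => sum_congr rfl fun j _ => ?_
    rw [hA i j]
    ring
  linarith

theorem eq_zero_of_add_sum_smul_eq_zero {ι : Type*} [Fintype ι] {A : ι → ι → ℝ}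
    (hA : ∀ i j, A j i = -A i j) {u : ι → M} (hu : ∀ i, u i + ∑ j, A i j • u j = 0) : u = 0 := by
  suffices h : ∀ φ : Module.Dual ℝ M, ∀ i, φ (u i) = 0 from
    funext fun i => (Module.forall_dual_apply_eq_zero_iff ℝ (u i)).mp fun φ => h φ i
  intro φ
  have hφu : ∀ i, φ (u i) + ∑ j, A i j * φ (u j) = 0 := fun i => by
    simpa using congrArg φ (hu i)
  have hsq : ∑ i, φ (u i) * φ (u i) = 0 := by
    calc ∑ i, φ (u i) * φ (u i)
        = ∑ i, φ (u i) * (φ (u i) + ∑ j, A i j * φ (u j)) -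
            ∑ i, ∑ j, A i j * φ (u i) * φ (u j) := by
          have h : ∀ i j, φ (u i) * (A i j * φ (u j)) = A i j * φ (u i) * φ (u j) :=
            fun _ _ => by ring
          simp only [mul_add, sum_add_distrib, mul_sum, h]
          ring
      _ = 0 := by simp [hφu, sum_sum_mul_mul_eq_zero_of_antisymm hA]
  intro i
  exact mul_self_eq_zero.mp
    ((sum_eq_zero_iff_of_nonneg fun j _ => mul_self_nonneg _).mp hsq i (mem_univ i))

theorem forall_eq_add_one_iff_sum_phiSkew {k : ℕ} [NeZero k] (hk : Odd k) (z zb : Fin k → M) :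
    (∀ i, zb i = z (i + 1)) ↔ ∀ i, ∑ j, phiSkew i j • (z j + zb j) = z i - zb i := by
  refine ⟨fun h i => by simp only [h]; exact sum_phiSkew_smul_add_succ hk z i, fun h => ?_⟩
  have hdiff : ∀ i, (zb i - z (i + 1)) + ∑ j, phiSkew i j • (zb j - z (j + 1)) = 0 := fun i => by
    have hsum : ∑ j, phiSkew i j • (zb j - z (j + 1)) =
        ∑ j, phiSkew i j • (z j + zb j) - ∑ j, phiSkew i j • (z j + z (j + 1)) := by
      rw [← sum_sub_distrib]
      exact sum_congr rfl fun j _ => by rw [← smul_sub]; abel_nf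
    rw [hsum, h i, sum_phiSkew_smul_add_succ hk z i]
    abel
  have hu := eq_zero_of_add_sum_smul_eq_zero phiSkew_swap hdiff
  exact fun i => sub_eq_zero.mp (congrFun hu i)

end Module

/-- For odd `k`, the subspace `C = {z̄_i = z_{i+1}}`, viewed in `(T*ℝ²ⁿ)^k` via the
componentwise symplectic identification, is the graph of the differential of
`Φ(q₁,…,q_k) = Σ_{i<j} (−1)^{i+j} ω(q_i,q_j)`. -/
theorem C_is_graph_of_dPhi (n k : ℕ) [NeZero k] (hk : Odd k)
    (Φ : (Fin k → (Fin n → ℝ) × (Fin n → ℝ)) → ℝ)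
    (hΦ : ∀ q, Φ q = ∑ i : Fin k, ∑ j : Fin k,
      if i < j then (-1 : ℝ) ^ ((i : ℕ) + (j : ℕ)) * stdOmega (q i) (q j) else 0)
    (z zb : Fin k → (Fin n → ℝ) × (Fin n → ℝ)) :
    (∀ i, zb i = z (i + 1)) ↔
    (∀ (i : Fin k) (v : (Fin n → ℝ) × (Fin n → ℝ)),
      dotE (fun a => ((zb i).2 a - (z i).2 a) / 2, fun a => ((z i).1 a - (zb i).1 a) / 2) v =
      fderiv ℝ Φ (fun j => (1 / 2 : ℝ) • (z j + zb j)) (Pi.single i v)) := by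
  have hΦ' : Φ = fun q => pairForm phiCoeff (stdOmegaCLM n) q q := funext fun q => by
    simp only [hΦ, pairForm_apply, stdOmegaCLM_apply, phiCoeff, ite_mul, zero_mul, smul_eq_mul]
  rw [forall_eq_add_one_iff_sum_phiSkew hk]
  refine forall_congr' fun i => ?_
  simp only [hΦ', fderiv_pairForm_diag_single (B := stdOmegaCLM n) _ stdOmega_swap,
    dotE_half_sub, stdOmegaCLM_apply]
  rw [forall_stdOmega_eq_iff]
  simp only [phiSkew, smul_comm _ (1 / 2 : ℝ), ← smul_sum]
  rw [smul_right_inj (by norm_num), eq_comm]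
end

section
/- Let L ⊂ ℝ²ⁿ be a Lagrangian submanifold given locally as the graph p = ∇F(q) near a point q₀, where F is not a quadratic polynomial on any neighborhood of q₀. Then in every neighborhood of q₀ in L there exist points q₁, q₂ ∈ L with ω(q₁ − q₀, q₂ − q₀) ≠ 0. -/
open Finset

noncomputable def pd {n : ℕ} (F : (Fin n → ℝ) → ℝ) (i : Fin n) (q : Fin n → ℝ) : ℝ :=
  fderiv ℝ F q (Pi.single i 1)

/-- Two continuous linear functionals agreeing on a ball around the origin agree. -/
lemma clm_ext_of_ball {n : ℕ} {r : ℝ} (hr : 0 < r) (φ ψ : (Fin n → ℝ) →L[ℝ] ℝ)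
    (h : ∀ w : Fin n → ℝ, ‖w‖ < r → φ w = ψ w) : φ = ψ := by
  refine ContinuousLinearMap.ext fun w => ?_
  set t : ℝ := r / (2 * (‖w‖ + 1)) with ht
  have htpos : 0 < t := by positivity
  have hmem : ‖t • w‖ < r := by
    rw [norm_smul, Real.norm_eq_abs, abs_of_pos htpos]
    have h1 : t * ‖w‖ < t * (2 * (‖w‖ + 1)) := by nlinarith [norm_nonneg w]
    have h2 : t * (2 * (‖w‖ + 1)) = r := by
      rw [ht]; field_simp
    linarith
  have h3 := h (t • w) hmem
  rw [map_smul, map_smul, smul_eq_mul, smul_eq_mul] at h3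
  exact mul_left_cancel₀ (ne_of_gt htpos) h3

/-- Expansion of the differential in terms of partial derivatives. -/
lemma fderiv_eq_sum_pd {n : ℕ} (F : (Fin n → ℝ) → ℝ) (x v : Fin n → ℝ) :
    fderiv ℝ F x v = ∑ i, v i * pd F i x := by
  have hv : fderiv ℝ F x v = fderiv ℝ F x (∑ i, Pi.single i (v i)) := by
    rw [Finset.univ_sum_single]
  rw [hv, map_sum]
  refine Finset.sum_congr rfl fun i _ => ?_
  have hsingle : (Pi.single i (v i) : Fin n → ℝ) = v i • (Pi.single i 1 : Fin n → ℝ) := by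
    ext j
    rcases eq_or_ne j i with rfl | h
    · simp
    · simp [Pi.single_eq_of_ne h]
  rw [hsingle, map_smul, smul_eq_mul, pd]

set_option maxHeartbeats 1600000 in
/-- Lemma 5 (non-degeneracy): if `L` is locally the graph `p = ∇F(q)` at the origin
(`F(0)=0`, `∇F(0)=0`), with `F` smooth and not a quadratic polynomial on any
neighborhood of `0`, then every neighborhood of the origin contains points
`q₁, q₂ ∈ L` with `ω(q₁ − q₀, q₂ − q₀) ≠ 0`. -/
theorem exists_nondegenerate_pair (n : ℕ) (F : (Fin n → ℝ) → ℝ)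
    (U : Set (Fin n → ℝ)) (hU : IsOpen U) (h0 : (0 : Fin n → ℝ) ∈ U)
    (hF : ContDiffOn ℝ (⊤ : ℕ∞) F U) (hF0 : F 0 = 0) (hdF0 : ∀ i, pd F i 0 = 0)
    (hnotquad : ∀ V : Set (Fin n → ℝ), IsOpen V → (0 : Fin n → ℝ) ∈ V →
      ¬ ∃ (c : ℝ) (l : (Fin n → ℝ) →ₗ[ℝ] ℝ) (B : (Fin n → ℝ) →ₗ[ℝ] (Fin n → ℝ) →ₗ[ℝ] ℝ),
        ∀ q ∈ V, F q = c + l q + B q q) :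
    ∀ V : Set (Fin n → ℝ), IsOpen V → (0 : Fin n → ℝ) ∈ V →
      ∃ u ∈ U ∩ V, ∃ v ∈ U ∩ V,
        stdOmega (u, fun i => pd F i u) (v, fun i => pd F i v) ≠ 0 := by
  intro V hV hV0
  by_contra hcon
  push_neg at hcon
  -- a ball inside U ∩ V
  obtain ⟨r, hr, hball⟩ := Metric.isOpen_iff.mp (hU.inter hV) 0 ⟨h0, hV0⟩
  have hballU : ∀ x : Fin n → ℝ, ‖x‖ < r → x ∈ U := fun x hx =>
    (hball (mem_ball_zero_iff.mpr hx)).1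
  have hdiffU : ∀ x ∈ U, DifferentiableAt ℝ F x := fun x hx =>
    (hF.contDiffAt (hU.mem_nhds hx)).differentiableAt (by simp)
  -- symmetry relation on the ball
  have hsym : ∀ u : Fin n → ℝ, ‖u‖ < r → ∀ v : Fin n → ℝ, ‖v‖ < r →
      fderiv ℝ F u v = fderiv ℝ F v u := by
    intro u hu v hv
    have humem : u ∈ U ∩ V := hball (mem_ball_zero_iff.mpr hu)
    have hvmem : v ∈ U ∩ V := hball (mem_ball_zero_iff.mpr hv)
    have h := hcon u humem v hvmem
    simp only [stdOmega] at h
    rw [fderiv_eq_sum_pd, fderiv_eq_sum_pd]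
    have e1 : ∑ i, v i * pd F i u = ∑ i, pd F i u * v i :=
      Finset.sum_congr rfl fun i _ => mul_comm _ _
    have e2 : ∑ i, u i * pd F i v = ∑ i, u i * pd F i v := rfl
    rw [e1]
    linarith [h]
  -- fderiv at 0 vanishes
  have h0d : fderiv ℝ F 0 = 0 := by
    refine ContinuousLinearMap.ext fun w => ?_
    rw [fderiv_eq_sum_pd]
    simp [hdF0]
  -- homogeneity of fderiv on the ball
  have hhom : ∀ (u : Fin n → ℝ) (a : ℝ), ‖u‖ < r → ‖a • u‖ < r →
      fderiv ℝ F (a • u) = a • fderiv ℝ F u := by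
    intro u a hu hau
    refine clm_ext_of_ball hr _ _ fun w hw => ?_
    rw [ContinuousLinearMap.smul_apply, hsym _ hau _ hw, map_smul, hsym _ hw _ hu]
  -- additivity of fderiv on the ball
  have hadd : ∀ u v : Fin n → ℝ, ‖u‖ < r → ‖v‖ < r → ‖u + v‖ < r →
      fderiv ℝ F (u + v) = fderiv ℝ F u + fderiv ℝ F v := by
    intro u v hu hv huv
    refine clm_ext_of_ball hr _ _ fun w hw => ?_
    rw [ContinuousLinearMap.add_apply, hsym _ huv _ hw, map_add, hsym _ hw _ hu,
      hsym _ hw _ hv]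
  -- the scaled derivative map
  set s : (Fin n → ℝ) → ℝ := fun u => r / (2 * (‖u‖ + 1)) with hs
  have hspos : ∀ u : Fin n → ℝ, 0 < s u := fun u => by
    rw [hs]; positivity
  have hsmem : ∀ u : Fin n → ℝ, ‖s u • u‖ < r := by
    intro u
    rw [norm_smul, Real.norm_eq_abs, abs_of_pos (hspos u)]
    have h1 : s u * ‖u‖ < s u * (2 * (‖u‖ + 1)) := by
      have := hspos u; nlinarith [norm_nonneg u]
    have h2 : s u * (2 * (‖u‖ + 1)) = r := by
      rw [hs]; field_simp
    linarith
  set D : (Fin n → ℝ) → ((Fin n → ℝ) →L[ℝ] ℝ) :=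
    fun u => (s u)⁻¹ • fderiv ℝ F (s u • u) with hD
  -- D is well-defined: independent of scale
  have hwd : ∀ (u : Fin n → ℝ) (a b : ℝ), a ≠ 0 → b ≠ 0 → ‖a • u‖ < r → ‖b • u‖ < r →
      a⁻¹ • fderiv ℝ F (a • u) = b⁻¹ • fderiv ℝ F (b • u) := by
    intro u a b ha hb hau hbu
    have h1 : a • u = (a / b) • (b • u) := by
      rw [smul_smul]; congr 1; field_simp
    rw [h1, hhom (b • u) (a / b) hbu (by rw [← h1]; exact hau), smul_smul]
    congr 1
    field_simp
  have hwdD : ∀ (u : Fin n → ℝ) (b : ℝ), b ≠ 0 → ‖b • u‖ < r →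
      D u = b⁻¹ • fderiv ℝ F (b • u) := fun u b hb hbu =>
    hwd u (s u) b (ne_of_gt (hspos u)) hb (hsmem u) hbu
  -- D agrees with fderiv on the ball
  have hDball : ∀ u : Fin n → ℝ, ‖u‖ < r → D u = fderiv ℝ F u := by
    intro u hu
    have := hwdD u 1 one_ne_zero (by simpa using hu)
    simpa using this
  -- D is additive
  have hDadd : ∀ u v : Fin n → ℝ, D (u + v) = D u + D v := by
    intro u v
    set t : ℝ := r / (2 * (‖u‖ + ‖v‖ + 1)) with htdef
    have htpos : 0 < t := by rw [htdef]; positivity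
    have hbound : t * (‖u‖ + ‖v‖) < r := by
      have h2 : t * (2 * (‖u‖ + ‖v‖ + 1)) = r := by rw [htdef]; field_simp
      nlinarith [norm_nonneg u, norm_nonneg v]
    have htu : ‖t • u‖ < r := by
      rw [norm_smul, Real.norm_eq_abs, abs_of_pos htpos]
      nlinarith [norm_nonneg v, htpos]
    have htv : ‖t • v‖ < r := by
      rw [norm_smul, Real.norm_eq_abs, abs_of_pos htpos]
      nlinarith [norm_nonneg u, htpos]
    have htuv : ‖t • (u + v)‖ < r := by
      rw [norm_smul, Real.norm_eq_abs, abs_of_pos htpos]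
      calc t * ‖u + v‖ ≤ t * (‖u‖ + ‖v‖) := by
            have := norm_add_le u v
            nlinarith
        _ < r := hbound
    rw [hwdD (u + v) t (ne_of_gt htpos) htuv, hwdD u t (ne_of_gt htpos) htu,
      hwdD v t (ne_of_gt htpos) htv]
    have : t • (u + v) = t • u + t • v := smul_add t u v
    rw [this, hadd (t • u) (t • v) htu htv (by rw [← this]; exact htuv), smul_add]
  -- D is homogeneous
  have hDsmul : ∀ (c : ℝ) (u : Fin n → ℝ), D (c • u) = c • D u := by
    intro c u
    rcases eq_or_ne c 0 with rfl | hc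
    · rw [zero_smul, zero_smul, hDball 0 (by simpa using hr), h0d]
    · set t : ℝ := r / (2 * ((|c| + 1) * (‖u‖ + 1))) with htdef
      have htpos : 0 < t := by rw [htdef]; positivity
      have hkey : t * ((|c| + 1) * (‖u‖ + 1)) < r := by
        have h2 : t * (2 * ((|c| + 1) * (‖u‖ + 1))) = r := by rw [htdef]; field_simp
        nlinarith [htpos]
      have habs : 0 ≤ |c| := abs_nonneg c
      have htu : ‖t • u‖ < r := by
        rw [norm_smul, Real.norm_eq_abs, abs_of_pos htpos]
        nlinarith [norm_nonneg u, htpos]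
      have htcu : ‖t • (c • u)‖ < r := by
        rw [smul_smul, norm_smul, Real.norm_eq_abs, abs_mul, abs_of_pos htpos]
        have hlt : t * |c| * ‖u‖ < t * ((|c| + 1) * (‖u‖ + 1)) := by
          nlinarith [norm_nonneg u, htpos, habs]
        linarith
      rw [hwdD (c • u) t (ne_of_gt htpos) htcu, hwdD u t (ne_of_gt htpos) htu]
      have hcomm : t • (c • u) = c • (t • u) := smul_comm t c u
      rw [hcomm, hhom (t • u) c htu (by rw [← hcomm]; exact htcu)]
      rw [smul_comm]
  -- F q = (fderiv F q q) / 2 on the ball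
  have hFq : ∀ q : Fin n → ℝ, ‖q‖ < r → F q = fderiv ℝ F q q / 2 := by
    intro q hq
    set A : ℝ := fderiv ℝ F q q with hA
    have hder : ∀ t ∈ Set.uIcc (0 : ℝ) 1,
        HasDerivAt (fun t : ℝ => F (t • q)) (t * A) t := by
      intro t ht
      rw [Set.uIcc_of_le (zero_le_one)] at ht
      have htq : ‖t • q‖ < r := by
        rw [norm_smul, Real.norm_eq_abs, abs_of_nonneg ht.1]
        calc t * ‖q‖ ≤ 1 * ‖q‖ := by nlinarith [norm_nonneg q, ht.2]
          _ = ‖q‖ := one_mul _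
          _ < r := hq
      have h1 : HasDerivAt (fun t : ℝ => t • q) q t := by
        simpa using (hasDerivAt_id t).smul_const q
      have h2 : HasFDerivAt F (fderiv ℝ F (t • q)) (t • q) :=
        (hdiffU _ (hballU _ htq)).hasFDerivAt
      have h3 := h2.comp_hasDerivAt t h1
      have h4 : fderiv ℝ F (t • q) q = t * A := by
        rw [hsym _ htq _ hq, map_smul, smul_eq_mul, hA]
      rw [← h4]
      exact h3
    have hint : IntervalIntegrable (fun t : ℝ => t * A) MeasureTheory.volume 0 1 :=
      (continuous_id.mul continuous_const).intervalIntegrable 0 1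
    have hftc := intervalIntegral.integral_eq_sub_of_hasDerivAt hder hint
    have hval : ∫ t in (0:ℝ)..1, t * A = A / 2 := by
      rw [intervalIntegral.integral_mul_const, integral_id]
      ring
    rw [hval] at hftc
    simp only [one_smul, zero_smul, hF0] at hftc
    rw [hA] at hftc ⊢
    linarith
  -- build the bilinear map and contradict hnotquad
  refine hnotquad (Metric.ball 0 r) Metric.isOpen_ball (Metric.mem_ball_self hr) ?_
  refine ⟨0, 0, ?_, ?_⟩
  · exact
    { toFun := fun u => (1 / 2 : ℝ) • ((D u).toLinearMap)
      map_add' := fun u v => by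
        refine LinearMap.ext fun w => ?_
        simp [hDadd]
      map_smul' := fun c u => by
        refine LinearMap.ext fun w => ?_
        simp [hDsmul]
        ring }
  · intro q hq
    have hq' : ‖q‖ < r := mem_ball_zero_iff.mp hq
    have h1 := hFq q hq'
    have h2 := hDball q hq'
    simp only [LinearMap.coe_mk, AddHom.coe_mk, LinearMap.zero_apply, LinearMap.smul_apply,
      ContinuousLinearMap.coe_coe, smul_eq_mul]
    rw [h2]
    rw [h1]
    ring
end
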